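/- No rank enters the collective after acknowledging: in any execution trace of the transition system (a function from ℕ to global states where consecutive states are related by a transition), if flag r = true at time t, then for all t' ≥ t up to the delivery of do-ckpt, st r at time t' is never inPhase2. -/
import Mathlib


inductive RankState where
  | ready | inPhase1 | inPhase2 | exitPhase2
deriving DecidableEq

/-- Global state of the two-phase checkpoint protocol. -/
structure PState (R : Type*) where
  flag : R → Bool
  st : R → RankState

open RankState in
/-- One transition of the two-phase checkpoint protocol: some rank `r` moves. -/
inductive PStep {R : Type*} [DecidableEq R] : PState R → PState R → Prop where
  /-- enter barrier: `ready → inPhase1` (always allowed) -/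
  | enterBarrier (s : PState R) (r : R) (h : s.st r = ready) :
      PStep s ⟨s.flag, Function.update s.st r inPhase1⟩
  /-- enter collective: `inPhase1 → inPhase2`, only if the rank has not
      acknowledged intend-to-checkpoint -/
  | enterCollective (s : PState R) (r : R) (h : s.st r = inPhase1)
      (hflag : s.flag r = false) :
      PStep s ⟨s.flag, Function.update s.st r inPhase2⟩
  /-- exit collective: `inPhase2 → exitPhase2` (always allowed) -/
  | exitCollective (s : PState R) (r : R) (h : s.st r = inPhase2) :
      PStep s ⟨s.flag, Function.update s.st r exitPhase2⟩
  /-- reset: `exitPhase2 → ready` (always allowed) -/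
  | reset (s : PState R) (r : R) (h : s.st r = exitPhase2) :
      PStep s ⟨s.flag, Function.update s.st r ready⟩
  /-- acknowledge intend-to-checkpoint, only in state `ready` or `inPhase1` -/
  | ack (s : PState R) (r : R) (h : s.st r = ready ∨ s.st r = inPhase1) :
      PStep s ⟨Function.update s.flag r true, s.st⟩

open RankState in
/-- no rank enters the collective after acknowledging: along any
execution trace of the two-phase protocol, if rank `r` has acknowledged
(`flag r = true`) at time `t` with state `ready` or `inPhase1`, then at every
later time `t' ≥ t` (up to the delivery of do-ckpt, before which flags are
never unset) its flag remains set and its state is never `inPhase2`. -/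
theorem no_collective_after_ack {R : Type*} [DecidableEq R]
    (σ : ℕ → PState R)
    (hstep : ∀ n, PStep (σ n) (σ (n + 1)))
    (t : ℕ) (r : R)
    (hflag : (σ t).flag r = true)
    (hst : (σ t).st r = ready ∨ (σ t).st r = inPhase1) :
    ∀ t', t ≤ t' → (σ t').flag r = true ∧ (σ t').st r ≠ inPhase2 := by
  intro t' hle
  induction t' with
  | zero =>
    have : t = 0 := Nat.le_zero.mp hle
    subst this
    exact ⟨hflag, by rcases hst with h | h <;> simp [h]⟩
  | succ n ih =>
    rcases Nat.lt_or_ge t (n + 1) with hlt | hge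
    · have hn : t ≤ n := Nat.lt_succ_iff.mp hlt
      obtain ⟨hf, hs⟩ := ih hn
      have hstepn := hstep n
      have hfn : (σ n).flag r = true := hf
      have hsn : (σ n).st r ≠ inPhase2 := hs
      generalize heq : σ (n + 1) = s2 at hstepn ⊢
      generalize heq' : σ n = s1 at hstepn hfn hsn
      clear hf hs heq heq' ih hstep hflag hst
      cases hstepn with
      | enterBarrier r' h =>
        refine ⟨hfn, ?_⟩
        by_cases hr : r' = r
        · subst hr; simp [Function.update]
        · simpa [Function.update, hr, Ne.symm hr] using hsn
      | enterCollective r' h hfl =>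
        refine ⟨hfn, ?_⟩
        by_cases hr : r' = r
        · subst hr; exact absurd hfl (by simp [hfn])
        · simpa [Function.update, hr, Ne.symm hr] using hsn
      | exitCollective r' h =>
        refine ⟨hfn, ?_⟩
        by_cases hr : r' = r
        · exact absurd (hr ▸ h) hsn
        · simpa [Function.update, hr, Ne.symm hr] using hsn
      | reset r' h =>
        refine ⟨hfn, ?_⟩
        by_cases hr : r' = r
        · subst hr; simp [Function.update]
        · simpa [Function.update, hr, Ne.symm hr] using hsn
      | ack r' h =>
        refine ⟨?_, hsn⟩
        by_cases hr : r' = r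
        · subst hr; simp [Function.update]
        · simpa [Function.update, hr, Ne.symm hr] using hfn
    · have : t = n + 1 := Nat.le_antisymm hle hge
      subst this
      exact ⟨hflag, by rcases hst with h | h <;> simp [h]⟩
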